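/- arXiv:1007.2706 — 12 statements merged into one kernel-verified Lean document; each statement's English description precedes it below -/
import Mathlib

section
/- Let G be a nontrivial group. Then G is finitely annihilated if and only if neither of the following holds: (1) G has weight 1 (G is the normal closure of a single element); (2) there exists g in G such that the quotient G/⟪g⟫^G of G by the normal closure of g has no proper finite-index subgroups. -/
/-- A group `G` is *finitely annihilated* if every element of `G` lies in some
proper normal finite-index subgroup of `G`. -/
def FinitelyAnnihilated (G : Type*) [Group G] : Prop :=
  ∀ g : G, ∃ N : Subgroup G, N.Normal ∧ N ≠ ⊤ ∧ N.FiniteIndex ∧ g ∈ N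

/-- The *weight* of a group `G`: the least `n` such that `G` is the normal
closure of some `n` of its elements (the trivial group has weight `0`). -/
noncomputable def weight (G : Type*) [Group G] : ℕ :=
  sInf {n : ℕ | ∃ S : Finset G, S.card = n ∧ Subgroup.normalClosure (S : Set G) = ⊤}

/-!
Since `g` lies in a normal subgroup `N` exactly when `⟪g⟫ ≤ N`, the proper normal finite-index
subgroups of `G` containing `g` correspond to those of `G ⧸ ⟪g⟫`, and a group has a proper
finite-index subgroup iff it has a proper normal one (its normal core). Hence `G` is finitely
annihilated iff no `G ⧸ ⟪g⟫` lacks proper finite-index subgroups. Condition (1) is a special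
case of (2): if `⟪g⟫ = G` then `G ⧸ ⟪g⟫` is trivial.
-/

namespace Subgroup

variable {G Q : Type*} [Group G] [Group Q]

theorem forall_finiteIndex_eq_top_iff_of_surjective {f : G →* Q} (hf : Function.Surjective f) :
    (∀ H : Subgroup Q, H.FiniteIndex → H = ⊤) ↔
      ∀ N : Subgroup G, N.Normal → N.FiniteIndex → f.ker ≤ N → N = ⊤ := by
  constructor
  · intro hQ N _ hN hker
    have : (N.map f).FiniteIndex := ⟨by rw [index_map_eq N hf hker]; exact hN.index_ne_zero⟩
    rw [← sup_eq_left.mpr hker, ← comap_map_eq, hQ _ this, comap_top]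
  · intro hG H hH
    have : (H.comap f).FiniteIndex :=
      ⟨by rw [index_comap_of_surjective H hf]; exact hH.index_ne_zero⟩
    have hcore : (H.comap f).normalCore = ⊤ :=
      hG _ inferInstance inferInstance (normal_le_normalCore.mpr (f.ker_le_comap H))
    apply comap_injective hf
    rw [comap_top, eq_top_iff, ← hcore]
    exact normalCore_le _

theorem forall_finiteIndex_quotient_normalClosure_eq_top_iff (g : G) :
    (∀ H : Subgroup (G ⧸ normalClosure ({g} : Set G)), H.FiniteIndex → H = ⊤) ↔
      ∀ N : Subgroup G, N.Normal → N.FiniteIndex → g ∈ N → N = ⊤ := by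
  rw [forall_finiteIndex_eq_top_iff_of_surjective (QuotientGroup.mk'_surjective _),
    QuotientGroup.ker_mk']
  refine forall_congr' fun N ↦ forall_congr' fun _ ↦ ?_
  rw [← normalClosure_subset_iff, Set.singleton_subset_iff, SetLike.mem_coe]

end Subgroup

theorem finitelyAnnihilated_iff_not_exists_forall_finiteIndex_quotient_eq_top
    (G : Type*) [Group G] :
    FinitelyAnnihilated G ↔
      ¬ ∃ g : G, ∀ H : Subgroup (G ⧸ Subgroup.normalClosure ({g} : Set G)),
        H.FiniteIndex → H = ⊤ := by
  simp only [Subgroup.forall_finiteIndex_quotient_normalClosure_eq_top_iff, FinitelyAnnihilated]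
  push Not
  exact forall_congr' fun _ ↦ exists_congr fun _ ↦ by tauto

theorem exists_normalClosure_singleton_eq_top_of_weight_eq_one {G : Type*} [Group G]
    (hw : weight G = 1) : ∃ g : G, Subgroup.normalClosure ({g} : Set G) = ⊤ := by
  have hne : {n : ℕ | ∃ S : Finset G, S.card = n ∧
      Subgroup.normalClosure (S : Set G) = ⊤}.Nonempty :=
    Nat.nonempty_of_sInf_eq_succ hw
  obtain ⟨S, hcard, htop⟩ := Nat.sInf_mem hne
  rw [← weight, hw] at hcard
  obtain ⟨g, rfl⟩ := Finset.card_eq_one.mp hcard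
  exact ⟨g, by simpa using htop⟩

theorem finitelyAnnihilated_iff_not_weight_one_and_no_bad_element_general
    (G : Type*) [Group G] :
    FinitelyAnnihilated G ↔
      ¬ (weight G = 1) ∧
      ¬ (∃ g : G, ∀ H : Subgroup (G ⧸ Subgroup.normalClosure ({g} : Set G)),
            H.FiniteIndex → H = ⊤) := by
  rw [finitelyAnnihilated_iff_not_exists_forall_finiteIndex_quotient_eq_top]
  refine ⟨fun hbad ↦ ⟨fun hw ↦ hbad ?_, hbad⟩, And.right⟩
  obtain ⟨g, hg⟩ := exists_normalClosure_singleton_eq_top_of_weight_eq_one hw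
  refine ⟨g, fun H _ ↦ ?_⟩
  have : Subsingleton (G ⧸ Subgroup.normalClosure ({g} : Set G)) := by
    rw [hg]; exact QuotientGroup.subsingleton_quotient_top
  exact Subsingleton.elim _ _

/-- A nontrivial group `G` is finitely annihilated iff neither (1) `G` has weight `1`,
nor (2) there is some `g ∈ G` such that `G / ⟪g⟫ᴳ` has no proper finite-index subgroups. -/
theorem finitelyAnnihilated_iff_not_weight_one_and_no_bad_element
    (G : Type*) [Group G] [Nontrivial G] :
    FinitelyAnnihilated G ↔
      ¬ (weight G = 1) ∧
      ¬ (∃ g : G, ∀ H : Subgroup (G ⧸ Subgroup.normalClosure ({g} : Set G)),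
            H.FiniteIndex → H = ⊤) :=
  finitelyAnnihilated_iff_not_weight_one_and_no_bad_element_general G
end

section
/- Let G be a finitely generated group with no infinite simple quotients (i.e., there is no normal subgroup N of G such that G/N is infinite and simple). Then G is finitely annihilated if and only if the weight of G is strictly greater than 1. -/
/-!
Both conditions say that no normal closure `⟨⟨g⟩⟩` of a single element is all of `G`. For
finite annihilation one direction is immediate, since `⟨⟨g⟩⟩` lies in any proper normal subgroup
containing `g`. Conversely, if `⟨⟨g⟩⟩ ≠ G`, finite generation and Zorn's lemma enlarge `⟨⟨g⟩⟩` to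
a maximal proper normal subgroup `M`; then `G ⧸ M` is simple, hence finite by hypothesis, so `M`
is a proper normal subgroup of finite index containing `g`.
-/

section

variable {G : Type*} [Group G]

theorem Group.FG.top_mem_of_sSup_eq_top (hfg : Group.FG G) {K : Set (Subgroup G)}
    (hne : K.Nonempty) (hK : DirectedOn (· ≤ ·) K) (htop : sSup K = ⊤) : ⊤ ∈ K := by
  obtain ⟨S, hS⟩ := Group.fg_def.mp hfg
  have hcover : (S : Set G) ⊆ ⋃ H ∈ K, (H : Set G) := fun s _ => by
    simpa using (Subgroup.mem_sSup_of_directedOn hne hK).mp (htop ▸ Subgroup.mem_top s)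
  obtain ⟨H, hHK, hSH⟩ := DirectedOn.exists_mem_subset_of_finset_subset_biUnion hne hK hcover
  rwa [← top_le_iff.mp (hS ▸ (Subgroup.closure_le H).mpr hSH)]

theorem Group.FG.exists_maximal_normal_ge (hfg : Group.FG G) {N : Subgroup G} (hN : N.Normal)
    (hN_ne : N ≠ ⊤) :
    ∃ M, N ≤ M ∧ Maximal (fun K : Subgroup G => K.Normal ∧ K ≠ ⊤) M := by
  refine zorn_le_nonempty₀ _ (fun c hc hchain H hH => ?_) N ⟨hN, hN_ne⟩
  refine ⟨sSup c, ⟨Subgroup.sSup_normal c fun K hK => (hc hK).1, fun htop => ?_⟩,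
    fun _ => le_sSup⟩
  exact (hc (hfg.top_mem_of_sSup_eq_top ⟨H, hH⟩ hchain.directedOn htop)).2 rfl

theorem isSimpleGroup_quotient_of_maximal_normal {M : Subgroup G}
    (hmax : Maximal (fun K : Subgroup G => K.Normal ∧ K ≠ ⊤) M) :
    letI := hmax.prop.1; IsSimpleGroup (G ⧸ M) := by
  let := hmax.prop.1
  have : Nontrivial (G ⧸ M) := QuotientGroup.nontrivial_iff.mpr hmax.prop.2
  refine ⟨fun H hH => ?_⟩
  have hsurj := QuotientGroup.mk'_surjective M
  have hMH : M ≤ H.comap (QuotientGroup.mk' M) := QuotientGroup.le_comap_mk' M H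
  by_cases htop : H.comap (QuotientGroup.mk' M) = ⊤
  · exact .inr (Subgroup.comap_injective hsurj (by rw [htop, Subgroup.comap_top]))
  · have hHM : H.comap (QuotientGroup.mk' M) = M := hmax.eq_of_ge ⟨hH.comap _, htop⟩ hMH
    refine .inl (Subgroup.comap_injective hsurj ?_)
    rw [hHM, MonoidHom.comap_bot, QuotientGroup.ker_mk']

theorem weight_le_one_iff (hfg : Group.FG G) :
    weight G ≤ 1 ↔ ∃ g : G, Subgroup.normalClosure {g} = ⊤ := by
  constructor
  · intro hw
    obtain ⟨S, hS⟩ := Group.fg_def.mp hfg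
    obtain ⟨T, hT_card, hT⟩ := Nat.sInf_mem (s := {n : ℕ | ∃ S : Finset G, S.card = n ∧
      Subgroup.normalClosure (S : Set G) = ⊤})
      ⟨S.card, S, rfl, top_le_iff.mp (hS ▸ Subgroup.closure_le_normalClosure)⟩
    obtain ⟨g, hTg⟩ := Finset.card_le_one_iff_subset_singleton.mp (hT_card.trans_le hw)
    refine ⟨g, top_le_iff.mp (hT ▸ Subgroup.normalClosure_mono ?_)⟩
    exact_mod_cast hTg
  · rintro ⟨g, hg⟩
    exact Nat.sInf_le ⟨{g}, Finset.card_singleton g, by simpa using hg⟩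

theorem FinitelyAnnihilated.normalClosure_singleton_ne_top (hG : FinitelyAnnihilated G)
    (g : G) : Subgroup.normalClosure {g} ≠ ⊤ := by
  obtain ⟨N, hN, hN_ne, -, hgN⟩ := hG g
  exact fun htop => hN_ne (top_le_iff.mp (htop ▸ Subgroup.normalClosure_le_normal
    (Set.singleton_subset_iff.mpr hgN)))

theorem finitelyAnnihilated_of_normalClosure_singleton_ne_top (hfg : Group.FG G)
    (hnosimple : ¬ ∃ N : Subgroup G, ∃ hN : N.Normal,
        Infinite (G ⧸ N) ∧ (letI := hN; IsSimpleGroup (G ⧸ N)))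
    (h : ∀ g : G, Subgroup.normalClosure {g} ≠ ⊤) : FinitelyAnnihilated G := by
  intro g
  obtain ⟨M, hgM, hmax⟩ := hfg.exists_maximal_normal_ge Subgroup.normalClosure_normal (h g)
  have : Finite (G ⧸ M) := not_infinite_iff_finite.mp fun hinf =>
    hnosimple ⟨M, hmax.prop.1, hinf, isSimpleGroup_quotient_of_maximal_normal hmax⟩
  exact ⟨M, hmax.prop.1, hmax.prop.2, Subgroup.finiteIndex_of_finite_quotient,
    hgM (Subgroup.subset_normalClosure rfl)⟩

end

/-- A finitely generated group with no infinite simple quotients is finitely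
annihilated iff its weight is strictly greater than `1`. -/
theorem finitelyAnnihilated_iff_one_lt_weight
    (G : Type*) [Group G] (hfg : Group.FG G)
    (hnosimple : ¬ ∃ N : Subgroup G, ∃ hN : N.Normal,
        Infinite (G ⧸ N) ∧ (letI := hN; IsSimpleGroup (G ⧸ N))) :
    FinitelyAnnihilated G ↔ 1 < weight G := by
  rw [← not_le, weight_le_one_iff hfg, not_exists]
  exact ⟨FinitelyAnnihilated.normalClosure_singleton_ne_top,
    finitelyAnnihilated_of_normalClosure_singleton_ne_top hfg hnosimple⟩
end

section
/- Let G be a nontrivial finitely generated group which is not finitely annihilated and whose weight is not equal to 1. Then G has an infinite simple quotient, i.e., there exists a normal subgroup N of G such that G/N is infinite and simple. -/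
/-!
Pick `g` lying in no proper normal subgroup of finite index. Since `G` is nontrivial and
`weight G ≠ 1`, the normal closure of `g` is proper, and since `G` is finitely generated,
Zorn's lemma enlarges it to a maximal proper normal subgroup `K`. Then `G ⧸ K` is simple,
and it is infinite because `K ∋ g` cannot have finite index.
-/

theorem weight_eq_one_of_normalClosure_singleton_eq_top {G : Type*} [Group G] [Nontrivial G]
    {g : G} (hg : Subgroup.normalClosure {g} = ⊤) : weight G = 1 := by
  have h_one_mem : 1 ∈ {n : ℕ | ∃ S : Finset G, S.card = n ∧
      Subgroup.normalClosure (S : Set G) = ⊤} :=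
    ⟨{g}, Finset.card_singleton g, by simpa using hg⟩
  have h_ne_zero : weight G ≠ 0 := by
    rintro h
    obtain ⟨S, hS, hclosure⟩ :=
      (Nat.sInf_eq_zero.mp h).resolve_right (Set.nonempty_of_mem h_one_mem).ne_empty
    rw [Finset.card_eq_zero.mp hS, Finset.coe_empty, Subgroup.normalClosure_empty] at hclosure
    exact bot_ne_top hclosure
  exact le_antisymm (Nat.sInf_le h_one_mem) (Nat.one_le_iff_ne_zero.mpr h_ne_zero)

namespace Subgroup

variable {G : Type*} [Group G]

theorem sSup_ne_top_of_directedOn [Group.FG G] {c : Set (Subgroup G)}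
    (hne : c.Nonempty) (hc : DirectedOn (· ≤ ·) c) (hproper : ∀ N ∈ c, N ≠ ⊤) :
    sSup c ≠ ⊤ := by
  intro htop
  obtain ⟨T, hT⟩ := Group.fg_def.mp ‹_›
  have hT_sub : (T : Set G) ⊆ ⋃ N ∈ c, (N : Set G) := fun t _ => by
    simpa using (mem_sSup_of_directedOn hne hc).mp (htop ▸ mem_top t)
  obtain ⟨N, hN, hTN⟩ := hc.exists_mem_subset_of_finset_subset_biUnion hne hT_sub
  exact hproper N hN (top_le_iff.mp (hT ▸ (closure_le N).mpr hTN))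

theorem exists_le_maximal_normal [Group.FG G] {H : Subgroup G} (hH : H.Normal)
    (hH_top : H ≠ ⊤) :
    ∃ K, H ≤ K ∧ Maximal (fun N : Subgroup G => N.Normal ∧ N ≠ ⊤) K := by
  refine zorn_le_nonempty₀ _ (fun c hcS hc N hN => ?_) H ⟨hH, hH_top⟩
  have hne : c.Nonempty := ⟨N, hN⟩
  refine ⟨sSup c, ⟨⟨fun n hn x => ?_⟩, ?_⟩, fun M hM => le_sSup hM⟩
  · obtain ⟨M, hM, hnM⟩ := (mem_sSup_of_directedOn hne hc.directedOn).mp hn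
    exact (mem_sSup_of_directedOn hne hc.directedOn).mpr ⟨M, hM, (hcS hM).1.conj_mem n hnM x⟩
  · exact sSup_ne_top_of_directedOn hne hc.directedOn fun M hM => (hcS hM).2

end Subgroup

theorem QuotientGroup.isSimpleGroup_of_maximal_normal {G : Type*} [Group G] {K : Subgroup G}
    [K.Normal] (hK : Maximal (fun N : Subgroup G => N.Normal ∧ N ≠ ⊤) K) :
    IsSimpleGroup (G ⧸ K) := by
  have : Nontrivial (G ⧸ K) := QuotientGroup.nontrivial_iff.mpr hK.prop.2
  refine ⟨fun N hN => ?_⟩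
  have hK_le : K ≤ N.comap (mk' K) := fun x hx => by
    simp [(eq_one_iff x).mpr hx]
  have hN_eq : N = (N.comap (mk' K)).map (mk' K) :=
    (Subgroup.map_comap_eq_self_of_surjective (mk'_surjective K) N).symm
  by_cases hcomap_top : N.comap (mk' K) = ⊤
  · right
    rw [hN_eq, hcomap_top, Subgroup.map_top_of_surjective _ (mk'_surjective K)]
  · left
    have hcomap_eq := le_antisymm (hK.2 ⟨hN.comap (mk' K), hcomap_top⟩ hK_le) hK_le
    rw [hN_eq, Subgroup.map_eq_bot_iff, hcomap_eq, ker_mk']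

/-- A nontrivial finitely generated group which is neither finitely annihilated nor of
weight `1` has an infinite simple quotient. -/
theorem exists_infinite_simple_quotient
    (G : Type*) [Group G] [Nontrivial G] (hfg : Group.FG G)
    (hnfa : ¬ FinitelyAnnihilated G) (hw : weight G ≠ 1) :
    ∃ N : Subgroup G, ∃ hN : N.Normal,
      Infinite (G ⧸ N) ∧ (letI := hN; IsSimpleGroup (G ⧸ N)) := by
  obtain ⟨g, hg⟩ : ∃ g : G, ∀ N : Subgroup G, N.Normal → N ≠ ⊤ → N.FiniteIndex → g ∉ N := by
    simpa [FinitelyAnnihilated] using hnfa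
  have hclosure_ne_top : Subgroup.normalClosure {g} ≠ ⊤ := fun h =>
    hw (weight_eq_one_of_normalClosure_singleton_eq_top h)
  obtain ⟨K, hgK, hK⟩ :=
    Subgroup.exists_le_maximal_normal Subgroup.normalClosure_normal hclosure_ne_top
  have := hK.prop.1
  refine ⟨K, hK.prop.1, ?_, QuotientGroup.isSimpleGroup_of_maximal_normal hK⟩
  rw [← not_finite_iff_infinite, ← Subgroup.finiteIndex_iff_finite_quotient]
  exact fun hfin => hg K hK.prop.1 hK.prop.2 hfin (hgK (Subgroup.subset_normalClosure rfl))
end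

section
/- Let G be a group and H a normal subgroup of G such that the quotient group G/H is finitely annihilated. Then G itself is finitely annihilated. -/
open Subgroup in
theorem FinitelyAnnihilated.of_surjective {G Q : Type*} [Group G] [Group Q] {f : G →* Q}
    (hf : Function.Surjective f) (hQ : FinitelyAnnihilated Q) : FinitelyAnnihilated G := by
  intro g
  obtain ⟨N, hN, hN_ne_top, hN_fi, hgN⟩ := hQ (f g)
  refine ⟨N.comap f, hN.comap f, ?_, ⟨?_⟩, hgN⟩
  · rwa [← (comap_injective hf).ne_iff, comap_top] at hN_ne_top
  · rw [index_comap_of_surjective N hf]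
    exact hN_fi.index_ne_zero

/-- If some quotient `G/H` of a group `G` is finitely annihilated, then so is `G`. -/
theorem finitelyAnnihilated_of_quotient
    (G : Type*) [Group G] (H : Subgroup G) [H.Normal]
    (h : FinitelyAnnihilated (G ⧸ H)) :
    FinitelyAnnihilated G :=
  h.of_surjective (QuotientGroup.mk'_surjective H)
end

section
/- Let X be a set. The free group F_X on X is finitely annihilated if and only if X has cardinality at least 2. -/
theorem isCyclic_of_closure_subsingleton_eq_top {G : Type*} [Group G] {s : Set G}
    (hs : s.Subsingleton) (hclosure : Subgroup.closure s = ⊤) : IsCyclic G := by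
  rcases hs.eq_empty_or_singleton with rfl | ⟨g, rfl⟩
  · rw [Subgroup.closure_empty] at hclosure
    have := Subgroup.subsingleton_iff.mp (subsingleton_of_bot_eq_top hclosure)
    infer_instance
  · rw [← Subgroup.zpowers_eq_closure] at hclosure
    exact isCyclic_iff_exists_zpowers_eq_top.mpr ⟨g, hclosure⟩

instance FreeGroup.isCyclic_of_subsingleton {X : Type*} [Subsingleton X] :
    IsCyclic (FreeGroup X) :=
  isCyclic_of_closure_subsingleton_eq_top (Set.subsingleton_range _) (FreeGroup.closure_range_of X)

namespace FinitelyAnnihilated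

variable {G H : Type*} [Group G] [Group H]

theorem not_isCyclic (hG : FinitelyAnnihilated G) : ¬IsCyclic G := by
  intro
  obtain ⟨g, hg⟩ := IsCyclic.exists_generator (α := G)
  obtain ⟨N, -, hN, -, hgN⟩ := hG g
  exact hN (eq_top_iff.mpr fun x _ => Subgroup.zpowers_le.mpr hgN (hg x))

theorem of_not_isCyclic {A : Type*} [CommGroup A] [Finite A] (hA : ¬IsCyclic A) :
    FinitelyAnnihilated A := fun a =>
  ⟨Subgroup.zpowers a, Subgroup.normal_of_isMulCommutative _,
    fun h => hA (isCyclic_iff_exists_zpowers_eq_top.mpr ⟨a, h⟩), inferInstance,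
    Subgroup.mem_zpowers a⟩

theorem of_surjective_s7 {f : G →* H} (hf : Function.Surjective f) (hH : FinitelyAnnihilated H) :
    FinitelyAnnihilated G := by
  intro g
  obtain ⟨N, hN, hNtop, hNfin, hgN⟩ := hH (f g)
  refine ⟨N.comap f, hN.comap f, ?_, ⟨?_⟩, hgN⟩
  · rwa [Ne, ← Subgroup.comap_top f, (Subgroup.comap_injective hf).eq_iff]
  · rw [Subgroup.index_comap_of_surjective N hf]
    exact hNfin.index_ne_zero

end FinitelyAnnihilated

theorem FreeGroup.exists_surjective_kleinFour {X : Type*} {x₀ x₁ : X} (hne : x₀ ≠ x₁) :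
    ∃ f : FreeGroup X →* Multiplicative (ZMod 2 × ZMod 2), Function.Surjective f := by
  classical
  refine ⟨FreeGroup.lift fun x =>
    Multiplicative.ofAdd ((if x = x₀ then 1 else 0), (if x = x₁ then 1 else 0)), fun p => ?_⟩
  obtain ⟨m, hm⟩ := ZMod.intCast_surjective (Multiplicative.toAdd p).1
  obtain ⟨n, hn⟩ := ZMod.intCast_surjective (Multiplicative.toAdd p).2
  refine ⟨FreeGroup.of x₀ ^ m * FreeGroup.of x₁ ^ n, ?_⟩
  apply Multiplicative.toAdd.injective
  ext <;> simp [hne, hne.symm, hm, hn]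

/-- The free group on a set `X` is finitely annihilated iff `X` has at least two
elements. -/
theorem freeGroup_finitelyAnnihilated_iff (X : Type*) :
    FinitelyAnnihilated (FreeGroup X) ↔ 2 ≤ Cardinal.mk X := by
  rw [Cardinal.two_le_iff_one_lt, Cardinal.one_lt_iff_nontrivial]
  constructor
  · intro hFA
    by_contra hX
    have := not_nontrivial_iff_subsingleton.mp hX
    exact hFA.not_isCyclic inferInstance
  · intro
    obtain ⟨x₀, x₁, hne⟩ := exists_pair_ne X
    obtain ⟨f, hf⟩ := FreeGroup.exists_surjective_kleinFour hne
    exact (FinitelyAnnihilated.of_not_isCyclic IsKleinFour.not_isCyclic).of_surjective_s7 hf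
end

section
/- Let S be a group having no proper normal finite-index subgroups, and let G be a group of weight 1 (i.e., G is the normal closure of a single element). Then the free product G ∗ S is not finitely annihilated. -/
namespace Subgroup

variable {G G' : Type*} [Group G] [Group G']

theorem finiteIndex_comap (f : G →* G') (H : Subgroup G') [H.FiniteIndex] :
    (H.comap f).FiniteIndex := by
  rw [finiteIndex_iff, ← relIndex_top_right, ← comap_top f]
  exact relIndex_comap_ne_zero f (by simpa using FiniteIndex.index_ne_zero)

theorem eq_top_of_normalClosure_singleton_eq_top_of_mem {N : Subgroup G} [N.Normal] {g : G}
    (hg : normalClosure {g} = ⊤) (hgN : g ∈ N) : N = ⊤ :=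
  top_le_iff.mp (hg ▸ normalClosure_le_normal (Set.singleton_subset_iff.mpr hgN))

end Subgroup

namespace Monoid.Coprod

variable {G H : Type*} [Group G] [Group H]

theorem subgroup_eq_top_of_comap_inl_of_comap_inr {N : Subgroup (G ∗ H)}
    (hl : N.comap inl = ⊤) (hr : N.comap inr = ⊤) : N = ⊤ := by
  rw [← top_le_iff, ← range_inl_sup_range_inr, MonoidHom.range_eq_map, MonoidHom.range_eq_map]
  exact sup_le (Subgroup.map_le_iff_le_comap.mpr hl.ge) (Subgroup.map_le_iff_le_comap.mpr hr.ge)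

end Monoid.Coprod

/-- The free product of a group `S` having no proper normal finite-index subgroups
with a group `G` of weight `1` is never finitely annihilated. -/
theorem coprod_not_finitelyAnnihilated
    (S G : Type*) [Group S] [Group G]
    (hS : ∀ N : Subgroup S, N.Normal → N.FiniteIndex → N = ⊤)
    (hG : ∃ g : G, Subgroup.normalClosure ({g} : Set G) = ⊤) :
    ¬ FinitelyAnnihilated (Monoid.Coprod G S) := by
  obtain ⟨g, hg⟩ := hG
  intro hFA
  obtain ⟨N, hN, hNtop, hNfi, hgN⟩ := hFA (Monoid.Coprod.inl g)
  refine hNtop (Monoid.Coprod.subgroup_eq_top_of_comap_inl_of_comap_inr ?_ ?_)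
  · exact Subgroup.eq_top_of_normalClosure_singleton_eq_top_of_mem hg hgN
  · exact hS _ (hN.comap _) (Subgroup.finiteIndex_comap _ N)
end

section
/- Let G be a finitely generated abelian group. Then G is finitely annihilated if and only if G is non-cyclic. -/
open CompleteLattice

namespace Subgroup

variable {G : Type*} [Group G]

theorem isCompactElement_zpowers (g : G) : IsCompactElement (zpowers g) := by
  rw [isCompactElement_iff_le_of_directed_sSup_le]
  intro s hne hdir hle
  obtain ⟨K, hKs, hgK⟩ := (mem_sSup_of_directedOn hne hdir).mp (hle (mem_zpowers g))
  exact ⟨K, hKs, zpowers_le.mpr hgK⟩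

theorem FG.isCompactElement {H : Subgroup G} (hH : H.FG) : IsCompactElement H := by
  obtain ⟨S, rfl⟩ := hH
  have hS : closure (S : Set G) = S.sup zpowers := by
    rw [Finset.sup_eq_iSup, ← Set.biUnion_of_singleton (S : Set G), closure_iUnion]
    simp [closure_iUnion, zpowers_eq_closure]
  rw [hS]
  exact isCompactElement_finsetSup S fun g _ => isCompactElement_zpowers g

end Subgroup

theorem Group.FG.isCoatomic_subgroup {G : Type*} [Group G] (hG : Group.FG G) :
    IsCoatomic (Subgroup G) :=
  coatomic_of_top_compact hG.out.isCompactElement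

theorem IsCoatom.isSimpleGroup_quotient {G : Type*} [Group G] {M : Subgroup G} [M.Normal]
    (hM : IsCoatom M) : IsSimpleGroup (G ⧸ M) := by
  let e : Subgroup (G ⧸ M) ≃o Set.Ici M := QuotientGroup.comapMk'OrderIso M
  have : IsSimpleOrder (Subgroup (G ⧸ M)) :=
    e.isSimpleOrder_iff.mpr (Set.isSimpleOrder_Ici_iff_isCoatom.mpr hM)
  have : Nontrivial (G ⧸ M) := Subgroup.nontrivial_iff.mp inferInstance
  exact ⟨fun H _ => IsSimpleOrder.eq_bot_or_eq_top H⟩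

theorem IsCoatom.finiteIndex {G : Type*} [CommGroup G] {M : Subgroup G} (hM : IsCoatom M) :
    M.FiniteIndex :=
  have := hM.isSimpleGroup_quotient
  have := IsSimpleGroup.finite (α := G ⧸ M)
  M.finiteIndex_of_finite_quotient

theorem IsCyclic.not_finitelyAnnihilated (G : Type*) [Group G] [IsCyclic G] :
    ¬ FinitelyAnnihilated G := fun hG => by
  obtain ⟨g, hg⟩ := isCyclic_iff_exists_zpowers_eq_top.mp ‹IsCyclic G›
  obtain ⟨N, -, hN, -, hgN⟩ := hG g
  exact hN (top_unique (hg ▸ Subgroup.zpowers_le.mpr hgN))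

theorem finitelyAnnihilated_of_not_isCyclic {G : Type*} [CommGroup G] [IsCoatomic (Subgroup G)]
    (hG : ¬ IsCyclic G) : FinitelyAnnihilated G := fun g => by
  have hg : Subgroup.zpowers g ≠ ⊤ := fun h => hG (isCyclic_iff_exists_zpowers_eq_top.mpr ⟨g, h⟩)
  obtain ⟨M, hM, hgM⟩ := (eq_top_or_exists_le_coatom (Subgroup.zpowers g)).resolve_left hg
  exact ⟨M, M.normal_of_isMulCommutative, hM.1, hM.finiteIndex, hgM (Subgroup.mem_zpowers g)⟩

/-- A finitely generated abelian group is finitely annihilated iff it is non-cyclic. -/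
theorem finitelyAnnihilated_iff_not_isCyclic
    (G : Type*) [CommGroup G] (hfg : Group.FG G) :
    FinitelyAnnihilated G ↔ ¬ IsCyclic G :=
  have := hfg.isCoatomic_subgroup
  ⟨fun hG _ => IsCyclic.not_finitelyAnnihilated G hG, finitelyAnnihilated_of_not_isCyclic⟩
end

section
/- Let G be a nontrivial finitely generated group all of whose finite simple quotients are abelian (i.e., for every normal subgroup N of G such that G/N is finite and simple, the quotient G/N is abelian). Then G is finitely annihilated if and only if the abelianisation G^ab is non-cyclic. -/
/-!
In a finitely generated group `⊤` is a compact element of the subgroup lattice, so by Zorn every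
proper normal subgroup lies in a maximal one, and the quotient by it is simple.
If `g` lies in a proper normal finite-index subgroup `N`, the simple quotient over `N` is finite,
hence abelian, so `N ⊔ [G, G]` is proper and the image of `g` cannot generate `Gᵃᵇ`.
Conversely, if the image of `g` does not generate `Gᵃᵇ`, its preimage is a proper subgroup
containing `[G, G]`; a simple quotient over it is abelian, hence of prime order, hence finite.
-/

open Subgroup

section

variable {G : Type*} [Group G]

theorem Subgroup.FG.isCompactElement_s11 {P : Subgroup G} (hP : P.FG) : IsCompactElement P := by
  obtain ⟨S, rfl⟩ := hP
  rw [CompleteLattice.isCompactElement_iff_le_of_directed_sSup_le]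
  intro c hne hdir hle
  have hS : (S : Set G) ⊆ ⋃ K ∈ c, (K : Set G) := fun x hx ↦ by
    obtain ⟨K, hK, hxK⟩ := (mem_sSup_of_directedOn hne hdir).mp (hle (subset_closure hx))
    exact Set.mem_biUnion hK hxK
  obtain ⟨K, hK, hSK⟩ := hdir.exists_mem_subset_of_finset_subset_biUnion hne hS
  exact ⟨K, hK, closure_le K |>.mpr hSK⟩

theorem Group.FG.exists_le_maximal_normal [Group.FG G] {N : Subgroup G} (hN : N.Normal)
    (hNtop : N ≠ ⊤) : ∃ M, N ≤ M ∧ Maximal (fun K : Subgroup G ↦ K.Normal ∧ K ≠ ⊤) M := by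
  refine zorn_le_nonempty₀ {K : Subgroup G | K.Normal ∧ K ≠ ⊤}
    (fun c hc hchain K hK ↦ ⟨sSup c, ⟨?_, ?_⟩, fun _ ↦ le_sSup⟩) N ⟨hN, hNtop⟩
  · exact sSup_normal c fun K hK ↦ (hc hK).1
  · exact (CompleteLattice.IsCompactElement.directed_sSup_lt_of_lt
      (Group.fg_def.mp ‹_›).isCompactElement_s11 ⟨K, hK⟩ hchain.directedOn
      fun K hK ↦ lt_top_iff_ne_top.mpr (hc hK).2).ne

theorem QuotientGroup.isSimpleGroup_of_maximal_normal_s11 {M : Subgroup G} [M.Normal]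
    (hM : Maximal (fun K : Subgroup G ↦ K.Normal ∧ K ≠ ⊤) M) : IsSimpleGroup (G ⧸ M) := by
  have : Nontrivial (G ⧸ M) := QuotientGroup.nontrivial_iff.mpr hM.1.2
  refine ⟨fun H hH ↦ ?_⟩
  have hcomap := comap_injective (QuotientGroup.mk'_surjective M)
  by_cases htop : H.comap (QuotientGroup.mk' M) = ⊤
  · exact .inr (hcomap (by rw [htop, comap_top]))
  · refine .inl (hcomap ?_)
    have hle := QuotientGroup.le_comap_mk' M H
    rw [MonoidHom.comap_bot, QuotientGroup.ker_mk']
    exact le_antisymm (hM.2 ⟨hH.comap _, htop⟩ hle) hle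

theorem Group.FG.exists_le_isSimpleGroup_quotient [Group.FG G] {N : Subgroup G} (hN : N.Normal)
    (hNtop : N ≠ ⊤) : ∃ M : Subgroup G, ∃ _ : M.Normal, N ≤ M ∧ IsSimpleGroup (G ⧸ M) := by
  obtain ⟨M, hNM, hM⟩ := Group.FG.exists_le_maximal_normal hN hNtop
  have hMnormal := hM.1.1
  exact ⟨M, hMnormal, hNM, QuotientGroup.isSimpleGroup_of_maximal_normal_s11 hM⟩

theorem Abelianization.of_surjective : Function.Surjective (of : G → Abelianization G) :=
  QuotientGroup.mk_surjective

theorem Abelianization.isCyclic_iff_exists_zpowers_of_eq_top :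
    IsCyclic (Abelianization G) ↔ ∃ g : G, zpowers (of g) = ⊤ := by
  rw [isCyclic_iff_exists_zpowers_eq_top, of_surjective.exists]

theorem Abelianization.eq_top_of_commutator_le_of_zpowers_of_eq_top {M : Subgroup G}
    (hM : commutator G ≤ M) {g : G} (hg : g ∈ M) (hgen : zpowers (of g) = ⊤) : M = ⊤ := by
  have hmap : M.map of = ⊤ := top_le_iff.mp (hgen ▸ (zpowers_le.mpr ⟨g, hg, rfl⟩))
  rw [← sup_eq_left.mpr ((ker_of G).symm ▸ hM : of.ker ≤ M), ← comap_map_eq, hmap, comap_top]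

theorem Group.FG.sup_commutator_ne_top [Group.FG G]
    (habelian : ∀ (M : Subgroup G) [M.Normal], Finite (G ⧸ M) → IsSimpleGroup (G ⧸ M) →
      IsMulCommutative (G ⧸ M))
    {N : Subgroup G} (hN : N.Normal) (hNtop : N ≠ ⊤) [N.FiniteIndex] : N ⊔ commutator G ≠ ⊤ := by
  obtain ⟨M, hM, hNM, hsimple⟩ := Group.FG.exists_le_isSimpleGroup_quotient hN hNtop
  have : M.FiniteIndex := finiteIndex_of_le hNM
  have hcomm := habelian M inferInstance hsimple
  have hMtop : M ≠ ⊤ := QuotientGroup.nontrivial_iff.mp inferInstance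
  exact ne_top_of_le_ne_top hMtop
    (sup_le hNM (Normal.quotient_commutative_iff_commutator_le.mp hcomm))

theorem Group.FG.exists_normal_finiteIndex_le_of_commutator_le [Group.FG G] {K : Subgroup G}
    (hK : commutator G ≤ K) (hKtop : K ≠ ⊤) :
    ∃ M : Subgroup G, M.Normal ∧ M ≠ ⊤ ∧ M.FiniteIndex ∧ K ≤ M := by
  obtain ⟨M, hM, hKM, hsimple⟩ :=
    Group.FG.exists_le_isSimpleGroup_quotient (Normal.of_commutator_le (G := G) hK) hKtop
  have := Normal.quotient_commutative_iff_commutator_le.mpr (hK.trans hKM)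
  have : Finite (G ⧸ M) :=
    Nat.finite_of_card_ne_zero (Group.is_simple_iff_prime_card.mp hsimple).ne_zero
  exact ⟨M, hM, QuotientGroup.nontrivial_iff.mp inferInstance, finiteIndex_of_finite_quotient, hKM⟩

end

theorem finitelyAnnihilated_iff_abelianization_not_cyclic_of_finite_simple_quotients_abelian_general
    (G : Type*) [Group G] (hfg : Group.FG G)
    (habelian : ∀ (N : Subgroup G) (hN : N.Normal),
      letI := hN
      Finite (G ⧸ N) → IsSimpleGroup (G ⧸ N) → ∀ a b : G ⧸ N, a * b = b * a) :
    FinitelyAnnihilated G ↔ ¬ IsCyclic (Abelianization G) := by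
  rw [Abelianization.isCyclic_iff_exists_zpowers_of_eq_top, not_exists]
  refine forall_congr' fun g ↦ ⟨?_, fun hg ↦ ?_⟩
  · rintro ⟨N, hN, hNtop, hNfin, hgN⟩ hgen
    refine hfg.sup_commutator_ne_top (fun M hM hfin hsimple ↦ ⟨⟨habelian M hM hfin hsimple⟩⟩)
      hN hNtop ?_
    exact Abelianization.eq_top_of_commutator_le_of_zpowers_of_eq_top le_sup_right
      (mem_sup_left hgN) hgen
  · set K := (zpowers (Abelianization.of g)).comap Abelianization.of
    have hK : commutator G ≤ K := Abelianization.ker_of G ▸ ker_le_comap _ _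
    have hKtop : K ≠ ⊤ := by
      rwa [Ne, ← comap_top (Abelianization.of (G := G)),
        (comap_injective Abelianization.of_surjective).eq_iff]
    obtain ⟨M, hM, hMtop, hMfin, hKM⟩ := hfg.exists_normal_finiteIndex_le_of_commutator_le hK hKtop
    exact ⟨M, hM, hMtop, hMfin, hKM (mem_zpowers _)⟩

/-- A nontrivial finitely generated group all of whose finite simple quotients are
abelian is finitely annihilated iff its abelianisation is non-cyclic. -/
theorem finitelyAnnihilated_iff_abelianization_not_cyclic_of_finite_simple_quotients_abelian
    (G : Type*) [Group G] [Nontrivial G] (hfg : Group.FG G)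
    (habelian : ∀ (N : Subgroup G) (hN : N.Normal),
      letI := hN
      Finite (G ⧸ N) → IsSimpleGroup (G ⧸ N) → ∀ a b : G ⧸ N, a * b = b * a) :
    FinitelyAnnihilated G ↔ ¬ IsCyclic (Abelianization G) :=
  finitelyAnnihilated_iff_abelianization_not_cyclic_of_finite_simple_quotients_abelian_general G hfg
    habelian
end

section
/- Let m and n be coprime positive integers with mn > 1. Then the free product C_m ∗ C_n of the cyclic groups of orders m and n has weight 1, i.e., it is the normal closure of a single element (indeed of the element a b^{-1}, where a and b generate the two free factors). Consequently, C_m ∗ C_n is not finitely annihilated. -/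
section NormalGenerator

variable {G : Type*} [Group G] {g : G}

theorem weight_eq_one_of_normalClosure_eq_top [Nontrivial G]
    (hg : Subgroup.normalClosure {g} = ⊤) : weight G = 1 := by
  have h_one : 1 ∈ {n : ℕ | ∃ S : Finset G, S.card = n ∧
      Subgroup.normalClosure (S : Set G) = ⊤} :=
    ⟨{g}, Finset.card_singleton g, by simpa using hg⟩
  have h_zero : 0 ∉ {n : ℕ | ∃ S : Finset G, S.card = n ∧
      Subgroup.normalClosure (S : Set G) = ⊤} := by
    rintro ⟨S, hS, hS_top⟩
    rw [Finset.card_eq_zero.1 hS, Finset.coe_empty, Subgroup.normalClosure_empty] at hS_top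
    exact bot_ne_top hS_top
  refine le_antisymm (Nat.sInf_le h_one) (Nat.one_le_iff_ne_zero.2 fun h => ?_)
  rcases Nat.sInf_eq_zero.1 h with h | h
  · exact h_zero h
  · exact Set.eq_empty_iff_forall_notMem.1 h 1 h_one

theorem not_finitelyAnnihilated_of_normalClosure_eq_top
    (hg : Subgroup.normalClosure {g} = ⊤) : ¬ FinitelyAnnihilated G := by
  intro hFA
  obtain ⟨N, hN, hN_top, -, hgN⟩ := hFA g
  refine hN_top (top_le_iff.1 ?_)
  rw [← hg]
  exact Subgroup.normalClosure_le_normal (Set.singleton_subset_iff.2 hgN)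

end NormalGenerator

namespace Monoid.Coprod

variable {G H : Type*} [Group G] [Group H]

theorem normalClosure_inl_mul_inv_inr_eq_top {a : G} {b : H}
    (ha : Subgroup.closure {a} = ⊤) (hb : Subgroup.closure {b} = ⊤)
    (hab : (orderOf a).Coprime (orderOf b)) :
    Subgroup.normalClosure {inl a * (inr b)⁻¹} = (⊤ : Subgroup (G ∗ H)) := by
  set N := Subgroup.normalClosure ({inl a * (inr b)⁻¹} : Set (G ∗ H))
  set φ := QuotientGroup.mk' N
  have h_eq : φ (inl a) = φ (inr b) := by
    have h : φ (inl a * (inr b)⁻¹) = 1 :=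
      (QuotientGroup.eq_one_iff _).2 (Subgroup.subset_normalClosure rfl)
    rwa [map_mul, map_inv, mul_inv_eq_one] at h
  have h_one : φ (inl a) = 1 := by
    have h_dvd_a : orderOf (φ (inl a)) ∣ orderOf a := orderOf_map_dvd (φ.comp inl) a
    have h_dvd_b : orderOf (φ (inl a)) ∣ orderOf b := h_eq ▸ orderOf_map_dvd (φ.comp inr) b
    exact orderOf_eq_one_iff.1 (Nat.dvd_one.1 (hab ▸ Nat.dvd_gcd h_dvd_a h_dvd_b))
  have hφ : φ = 1 := hom_ext
    (MonoidHom.eq_of_eqOn_dense ha (by simpa using h_one))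
    (MonoidHom.eq_of_eqOn_dense hb (by simpa [← h_eq] using h_one))
  calc N = φ.ker := (QuotientGroup.ker_mk' N).symm
    _ = ⊤ := by rw [hφ, MonoidHom.ker_one]

theorem nontrivial_of_nontrivial_or {M N : Type*} [Monoid M] [Monoid N]
    (h : Nontrivial M ∨ Nontrivial N) : Nontrivial (M ∗ N) := by
  rcases h with hM | hN
  · exact inl_injective.nontrivial
  · exact inr_injective.nontrivial

end Monoid.Coprod

theorem ZMod.closure_ofAdd_one_eq_top (m : ℕ) :
    Subgroup.closure {Multiplicative.ofAdd (1 : ZMod m)} = ⊤ := by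
  refine (Subgroup.eq_top_iff' _).2 fun x => Subgroup.mem_closure_singleton.2 ?_
  obtain ⟨k, hk⟩ := ZMod.intCast_surjective (Multiplicative.toAdd x)
  exact ⟨k, by simp [← ofAdd_zsmul, hk]⟩

open Monoid.Coprod in
theorem coprod_cyclic_weight_one_general (m n : ℕ)
    (hco : Nat.Coprime m n) (hmn : 1 < m * n) :
    weight (Monoid.Coprod (Multiplicative (ZMod m)) (Multiplicative (ZMod n))) = 1 ∧
    Subgroup.normalClosure
      ({Monoid.Coprod.inl (Multiplicative.ofAdd (1 : ZMod m)) *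
          (Monoid.Coprod.inr (Multiplicative.ofAdd (1 : ZMod n)))⁻¹} :
        Set (Monoid.Coprod (Multiplicative (ZMod m)) (Multiplicative (ZMod n)))) = ⊤ ∧
    ¬ FinitelyAnnihilated
        (Monoid.Coprod (Multiplicative (ZMod m)) (Multiplicative (ZMod n))) := by
  have h_top := normalClosure_inl_mul_inv_inr_eq_top (ZMod.closure_ofAdd_one_eq_top m)
    (ZMod.closure_ofAdd_one_eq_top n) (by simpa using hco)
  have : Nontrivial (Multiplicative (ZMod m) ∗ Multiplicative (ZMod n)) := by
    have h : m ≠ 1 ∨ n ≠ 1 := by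
      by_contra! h
      simp [h.1, h.2] at hmn
    exact nontrivial_of_nontrivial_or (h.imp ZMod.nontrivial_iff.2 ZMod.nontrivial_iff.2)
  exact ⟨weight_eq_one_of_normalClosure_eq_top h_top, h_top,
    not_finitelyAnnihilated_of_normalClosure_eq_top h_top⟩

/-- For coprime positive integers `m, n` with `m * n > 1`, the free product
`C_m ∗ C_n` has weight `1`: it is the normal closure of the single element `a * b⁻¹`
(where `a, b` generate the two free factors); consequently it is not finitely
annihilated. -/
theorem coprod_cyclic_weight_one (m n : ℕ) (hm : 0 < m) (hn : 0 < n)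
    (hco : Nat.Coprime m n) (hmn : 1 < m * n) :
    weight (Monoid.Coprod (Multiplicative (ZMod m)) (Multiplicative (ZMod n))) = 1 ∧
    Subgroup.normalClosure
      ({Monoid.Coprod.inl (Multiplicative.ofAdd (1 : ZMod m)) *
          (Monoid.Coprod.inr (Multiplicative.ofAdd (1 : ZMod n)))⁻¹} :
        Set (Monoid.Coprod (Multiplicative (ZMod m)) (Multiplicative (ZMod n)))) = ⊤ ∧
    ¬ FinitelyAnnihilated
        (Monoid.Coprod (Multiplicative (ZMod m)) (Multiplicative (ZMod n))) :=
  coprod_cyclic_weight_one_general m n hco hmn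
end

section
/- Let G be a group generated by two elements a and b, where a and b have finite orders m and n respectively with m and n coprime. Then G is not finitely annihilated. -/
/-! If `a * b` lies in a normal subgroup `N`, then in `G ⧸ N` the images of `a` and `b` are
mutually inverse, so the order of the image of `a` divides both `orderOf a` and `orderOf b`.
Coprimality forces it to be trivial, hence `a, b ∈ N` and `N` contains the whole group. No
proper normal subgroup contains `a * b`, let alone one of finite index. -/

theorem eq_one_of_mul_eq_one_of_pow_eq_one_of_coprime {H : Type*} [Group H] {x y : H}
    {m n : ℕ} (hxy : x * y = 1) (hx : x ^ m = 1) (hy : y ^ n = 1) (hco : m.Coprime n) :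
    x = 1 := by
  have hx_inv : x = y⁻¹ := eq_inv_of_mul_eq_one_left hxy
  have hdvd_m : orderOf x ∣ m := orderOf_dvd_of_pow_eq_one hx
  have hdvd_n : orderOf x ∣ n := by
    rw [hx_inv, orderOf_inv]
    exact orderOf_dvd_of_pow_eq_one hy
  exact orderOf_eq_one_iff.1 (Nat.eq_one_of_dvd_coprimes hco hdvd_m hdvd_n)

namespace Subgroup

variable {G : Type*} [Group G] {N : Subgroup G} [N.Normal] {a b : G}

theorem left_mem_of_mul_mem_of_coprime_orderOf (hab : a * b ∈ N)
    (hco : (orderOf a).Coprime (orderOf b)) : a ∈ N := by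
  let φ := QuotientGroup.mk' N
  have hφab : φ a * φ b = 1 := by
    rw [← map_mul]
    exact (QuotientGroup.eq_one_iff _).2 hab
  have hφa : φ a ^ orderOf a = 1 := by rw [← map_pow, pow_orderOf_eq_one, map_one]
  have hφb : φ b ^ orderOf b = 1 := by rw [← map_pow, pow_orderOf_eq_one, map_one]
  exact (QuotientGroup.eq_one_iff _).1
    (eq_one_of_mul_eq_one_of_pow_eq_one_of_coprime hφab hφa hφb hco)

theorem eq_top_of_mul_mem_of_coprime_orderOf (hgen : closure ({a, b} : Set G) = ⊤)
    (hab : a * b ∈ N) (hco : (orderOf a).Coprime (orderOf b)) : N = ⊤ := by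
  have ha : a ∈ N := left_mem_of_mul_mem_of_coprime_orderOf hab hco
  have hb : b ∈ N := by simpa using N.mul_mem (N.inv_mem ha) hab
  rw [eq_top_iff, ← hgen, closure_le]
  rintro x (rfl | rfl) <;> assumption

end Subgroup

theorem not_finitelyAnnihilated_of_two_generators_coprime_orders_general
    (G : Type*) [Group G] (a b : G) (m n : ℕ)
    (ha : orderOf a = m) (hb : orderOf b = n) (hco : Nat.Coprime m n)
    (hgen : Subgroup.closure ({a, b} : Set G) = ⊤) :
    ¬ FinitelyAnnihilated G := by
  intro hFA
  obtain ⟨N, hN, hN_ne_top, -, hab⟩ := hFA (a * b)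
  subst ha hb
  exact hN_ne_top (Subgroup.eq_top_of_mul_mem_of_coprime_orderOf hgen hab hco)

/-- A group generated by two elements of finite coprime orders is not finitely
annihilated. -/
theorem not_finitelyAnnihilated_of_two_generators_coprime_orders
    (G : Type*) [Group G] (a b : G) (m n : ℕ) (hm : 0 < m) (hn : 0 < n)
    (ha : orderOf a = m) (hb : orderOf b = n) (hco : Nat.Coprime m n)
    (hgen : Subgroup.closure ({a, b} : Set G) = ⊤) :
    ¬ FinitelyAnnihilated G :=
  not_finitelyAnnihilated_of_two_generators_coprime_orders_general G a b m n ha hb hco hgen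
end

section
/- Let G be a group that is either finite or finitely generated and solvable. Then for every integer n > 1, the weight of G equals n if and only if the weight of the abelianisation G^ab equals n; moreover, the weight of G is at most 1 if and only if the weight of G^ab is at most 1. In particular, every nontrivial finite perfect group is the normal closure of a single element. -/
open Subgroup

section

variable {G H : Type*} [Group G] [Group H]

theorem map_eq_top_iff_sup_ker_eq_top {f : G →* H} (hf : Function.Surjective f) {K : Subgroup G} :
    K.map f = ⊤ ↔ K ⊔ f.ker = ⊤ := by
  rw [← codisjoint_iff, ← map_eq_range_iff, MonoidHom.range_eq_top.mpr hf]

theorem map_commutator_of_surjective {f : G →* H} (hf : Function.Surjective f) :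
    (commutator G).map f = commutator H := by
  simpa only [derivedSeries_one] using map_derivedSeries_eq hf 1

theorem map_normalClosure_insert {f : G →* H} (hf : Function.Surjective f) (a : G) (s : Set G) :
    (normalClosure (insert a s)).map f = normalClosure (insert (f a) (f '' s)) := by
  rw [map_normalClosure _ _ hf, Set.image_insert_eq]

theorem normalClosure_insert_mul_sup {K : Subgroup G} [K.Normal] {c : G} (hc : c ∈ K)
    (a : G) (s : Set G) :
    normalClosure (insert (a * c) s) ⊔ K = normalClosure (insert a s) ⊔ K := by
  have hmk : QuotientGroup.mk' K (a * c) = QuotientGroup.mk' K a := by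
    rw [map_mul, show QuotientGroup.mk' K c = 1 from (QuotientGroup.eq_one_iff c).mpr hc, mul_one]
  have hK := QuotientGroup.mk'_surjective K
  rw [← QuotientGroup.ker_mk' K, ← comap_map_eq, ← comap_map_eq, map_normalClosure_insert hK,
    map_normalClosure_insert hK, hmk]

theorem commutator_le_of_sup_eq_top {N L : Subgroup G} [N.Normal] (hNL : N ⊔ L = ⊤)
    (hL : ⁅L, L⁆ = ⊥) : commutator G ≤ N := by
  rw [← QuotientGroup.ker_mk' N, ← Subgroup.map_eq_bot_iff, commutator_def, ← hNL, map_commutator,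
    Subgroup.map_sup, QuotientGroup.map_mk'_self, bot_sup_eq, ← map_commutator, hL,
    Subgroup.map_bot]

theorem eq_top_of_sup_commutator_eq_top [Group.IsSolvable G] {N : Subgroup G} [N.Normal]
    (h : N ⊔ commutator G = ⊤) : N = ⊤ := by
  by_contra hN
  have := QuotientGroup.nontrivial_iff.mpr hN
  have hφ := QuotientGroup.mk'_surjective N
  refine (Group.IsSolvable.commutator_lt_top_of_nontrivial (G ⧸ N)).ne ?_
  rw [← map_commutator_of_surjective hφ, map_eq_top_iff_sup_ker_eq_top hφ, QuotientGroup.ker_mk',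
    sup_comm, h]

def Subgroup.IsMinimalNormal (L : Subgroup G) : Prop :=
  Minimal (fun K : Subgroup G => K.Normal ∧ K ≠ ⊥) L

theorem Subgroup.IsMinimalNormal.normal {L : Subgroup G} (hL : L.IsMinimalNormal) : L.Normal :=
  hL.prop.1

theorem Subgroup.IsMinimalNormal.ne_bot {L : Subgroup G} (hL : L.IsMinimalNormal) : L ≠ ⊥ :=
  hL.prop.2

theorem exists_isMinimalNormal [Finite G] [Nontrivial G] : ∃ L : Subgroup G, L.IsMinimalNormal :=
  exists_minimal_of_wellFoundedLT _ ⟨⊤, inferInstance, top_ne_bot⟩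

theorem Subgroup.IsMinimalNormal.eq_top_or_disjoint {L N : Subgroup G} (hL : L.IsMinimalNormal)
    [N.Normal] (hNL : N ⊔ L = ⊤) : N = ⊤ ∨ Disjoint N L := by
  have := hL.normal
  refine or_iff_not_imp_right.mpr fun hdis => ?_
  have hLN : L ≤ N :=
    (hL.le_of_le ⟨inferInstance, disjoint_iff.not.mp hdis⟩ inf_le_right).trans inf_le_left
  rwa [sup_eq_left.mpr hLN] at hNL

theorem Subgroup.IsMinimalNormal.le_commutator {L : Subgroup G} (hL : L.IsMinimalNormal)
    (hLL : ⁅L, L⁆ ≠ ⊥) : L ≤ _root_.commutator G :=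
  have := hL.normal
  (hL.le_of_le ⟨inferInstance, hLL⟩ (commutator_le_self L)).trans
    (commutator_mono le_top le_top)

theorem Subgroup.IsMinimalNormal.exists_mem_commutator_normalClosure_insert_mul_eq_top
    {L : Subgroup G} (hL : L.IsMinimalNormal) {a : G} {s : Set G}
    (hsupL : normalClosure (insert a s) ⊔ L = ⊤)
    (hsup : normalClosure (insert a s) ⊔ _root_.commutator G = ⊤) :
    ∃ c ∈ _root_.commutator G, normalClosure (insert (a * c) s) = ⊤ := by
  have := hL.normal
  by_cases hLL : ⁅L, L⁆ = ⊥
  · refine ⟨1, one_mem _, ?_⟩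
    rw [mul_one, ← hsup, left_eq_sup]
    exact commutator_le_of_sup_eq_top hsupL hLL
  obtain ⟨ℓ₀, hℓ₀, hℓ₀L⟩ := SetLike.not_le_iff_exists.mp
    (mt commutator_eq_bot_iff_le_centralizer.mpr hLL)
  rcases hL.eq_top_or_disjoint hsupL with htop | hdis
  · exact ⟨1, one_mem _, by rwa [mul_one]⟩
  rcases hL.eq_top_or_disjoint ((normalClosure_insert_mul_sup hℓ₀ a s).trans hsupL) with
    htop' | hdis'
  · exact ⟨ℓ₀, hL.le_commutator hLL hℓ₀, htop'⟩
  refine absurd (mem_centralizer_iff.mpr fun ℓ hℓ => ?_) hℓ₀L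
  have ha := commute_of_normal_of_disjoint _ _ normalClosure_normal hL.normal hdis a ℓ
    (subset_normalClosure (Set.mem_insert _ _)) hℓ
  have haℓ₀ := commute_of_normal_of_disjoint _ _ normalClosure_normal hL.normal hdis' (a * ℓ₀) ℓ
    (subset_normalClosure (Set.mem_insert _ _)) hℓ
  simpa using (ha.inv_left.mul_left haℓ₀).symm.eq

theorem exists_mem_commutator_normalClosure_insert_mul_eq_top [Finite G] {a : G} {s : Set G}
    (h : normalClosure (insert a s) ⊔ commutator G = ⊤) :
    ∃ c ∈ commutator G, normalClosure (insert (a * c) s) = ⊤ := by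
  induction hn : Nat.card G using Nat.strong_induction_on generalizing G with
  | _ n ih =>
  rcases subsingleton_or_nontrivial G with hG | hG
  · exact ⟨1, one_mem _, Subsingleton.elim _ _⟩
  obtain ⟨L, hL⟩ := exists_isMinimalNormal (G := G)
  have := hL.normal
  have hφ := QuotientGroup.mk'_surjective L
  have hcard : Nat.card (G ⧸ L) < n := by
    rw [← hn, card_eq_card_quotient_mul_card_subgroup L]
    exact lt_mul_of_one_lt_right Nat.card_pos ((one_lt_card_iff_ne_bot L).mpr hL.ne_bot)
  have hquot : normalClosure (insert (QuotientGroup.mk' L a) (QuotientGroup.mk' L '' s)) ⊔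
      commutator (G ⧸ L) = ⊤ := by
    rw [← map_normalClosure_insert hφ, ← map_commutator_of_surjective hφ, ← Subgroup.map_sup, h,
      map_top_of_surjective _ hφ]
  obtain ⟨c', hc', hctop⟩ := ih _ hcard hquot rfl
  rw [← map_commutator_of_surjective hφ] at hc'
  obtain ⟨c, hc, rfl⟩ := hc'
  have hsupL : normalClosure (insert (a * c) s) ⊔ L = ⊤ := by
    rwa [← QuotientGroup.ker_mk' L, ← map_eq_top_iff_sup_ker_eq_top hφ,
      map_normalClosure_insert hφ, map_mul]
  obtain ⟨ℓ, hℓ, hℓtop⟩ := hL.exists_mem_commutator_normalClosure_insert_mul_eq_top hsupL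
    ((normalClosure_insert_mul_sup hc a s).trans h)
  exact ⟨c * ℓ, mul_mem hc hℓ, by rwa [← mul_assoc]⟩

theorem weight_le_card {S : Finset G} (hS : normalClosure (S : Set G) = ⊤) : weight G ≤ S.card :=
  Nat.sInf_le ⟨S, rfl, hS⟩

theorem exists_card_eq_weight [Group.FG G] :
    ∃ S : Finset G, S.card = weight G ∧ normalClosure (S : Set G) = ⊤ := by
  obtain ⟨S, hS⟩ : (⊤ : Subgroup G).FG := Group.FG.out
  exact Nat.sInf_mem (s := {n | ∃ S : Finset G, S.card = n ∧ normalClosure (S : Set G) = ⊤})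
    ⟨S.card, S, rfl, eq_top_iff.mpr (hS ▸ closure_le_normalClosure)⟩

theorem weight_eq_zero_of_subsingleton [Subsingleton G] : weight G = 0 :=
  Nat.eq_zero_of_le_zero (weight_le_card (S := ∅) (Subsingleton.elim _ _))

theorem weight_pos [Group.FG G] [Nontrivial G] : 0 < weight G := by
  obtain ⟨S, hcard, hS⟩ := exists_card_eq_weight (G := G)
  rw [← hcard, Finset.card_pos, Finset.nonempty_iff_ne_empty]
  rintro rfl
  simp at hS

theorem weight_le_of_surjective [Group.FG G] {f : G →* H} (hf : Function.Surjective f) :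
    weight H ≤ weight G := by
  classical
  obtain ⟨S, hcard, hS⟩ := exists_card_eq_weight (G := G)
  calc weight H ≤ (S.image f).card := weight_le_card (by
        rw [Finset.coe_image, ← map_normalClosure _ _ hf, hS, map_top_of_surjective _ hf])
    _ ≤ weight G := hcard ▸ Finset.card_image_le

theorem exists_card_le_weight_normalClosure_sup_ker_eq_top [Group.FG G] {f : G →* H}
    (hf : Function.Surjective f) :
    ∃ S : Finset G, S.card ≤ weight H ∧ normalClosure (S : Set G) ⊔ f.ker = ⊤ := by
  classical
  have := Group.fg_of_surjective hf
  obtain ⟨T, hcard, hT⟩ := exists_card_eq_weight (G := H)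
  refine ⟨T.image (Function.surjInv hf), hcard ▸ Finset.card_image_le, ?_⟩
  rw [← map_eq_top_iff_sup_ker_eq_top hf, map_normalClosure _ _ hf, Finset.coe_image,
    ← Set.image_comp, (Function.rightInverse_surjInv hf).comp_eq_id, Set.image_id, hT]

theorem weight_le_max_card_one_of_sup_commutator_eq_top [Finite G] {S : Finset G}
    (h : normalClosure (S : Set G) ⊔ commutator G = ⊤) : weight G ≤ max S.card 1 := by
  classical
  rcases S.eq_empty_or_nonempty with rfl | ⟨a, ha⟩
  · obtain ⟨c, -, hc⟩ := exists_mem_commutator_normalClosure_insert_mul_eq_top (a := (1 : G))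
      (s := ∅) (eq_top_mono le_sup_right (by simpa using h))
    simpa using weight_le_card (S := {1 * c}) (by simpa using hc)
  · rw [← Finset.insert_erase ha] at h
    obtain ⟨c, -, hc⟩ := exists_mem_commutator_normalClosure_insert_mul_eq_top
      (by rwa [Finset.coe_insert] at h)
    calc weight G ≤ (insert (a * c) (S.erase a)).card :=
          weight_le_card (by rwa [Finset.coe_insert])
      _ ≤ (S.erase a).card + 1 := Finset.card_insert_le _ _
      _ = S.card := Finset.card_erase_add_one ha
      _ ≤ max S.card 1 := le_max_left _ _

theorem weight_le_max_weight_abelianization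
    (hG : Finite G ∨ (Group.FG G ∧ Group.IsSolvable G)) :
    weight G ≤ max (weight (Abelianization G)) 1 := by
  have : Group.FG G := hG.elim (fun _ => inferInstance) And.left
  obtain ⟨S, hcard, hS⟩ := exists_card_le_weight_normalClosure_sup_ker_eq_top
    (f := Abelianization.of) (QuotientGroup.mk'_surjective (commutator G))
  rw [Abelianization.ker_of] at hS
  rcases hG with hfin | ⟨-, hsol⟩
  · exact (weight_le_max_card_one_of_sup_commutator_eq_top hS).trans (max_le_max_right 1 hcard)
  · exact (weight_le_card (eq_top_of_sup_commutator_eq_top hS)).trans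
      (hcard.trans (le_max_left _ _))

end

/-- For a group `G` that is finite, or finitely generated and solvable: for every `n > 1`
the weight of `G` equals `n` iff the weight of `G^ab` equals `n`; and the weight of `G`
is at most `1` iff the weight of `G^ab` is at most `1`. In particular a nontrivial
perfect such group (e.g. any nontrivial finite perfect group) has weight `1`, i.e. it is
the normal closure of a single element. -/
theorem weight_eq_weight_abelianization
    (G : Type*) [Group G] (hG : Finite G ∨ (Group.FG G ∧ IsSolvable G)) :
    (∀ n : ℕ, 1 < n → (weight G = n ↔ weight (Abelianization G) = n)) ∧
    (weight G ≤ 1 ↔ weight (Abelianization G) ≤ 1) ∧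
    (Nontrivial G → Subsingleton (Abelianization G) → weight G = 1) := by
  have : Group.FG G := hG.elim (fun _ => inferInstance) And.left
  have hlower : weight (Abelianization G) ≤ weight G :=
    weight_le_of_surjective (QuotientGroup.mk'_surjective (commutator G))
  have hupper := weight_le_max_weight_abelianization hG
  refine ⟨fun n hn => by omega, by omega, fun _ _ => ?_⟩
  have := weight_pos (G := G)
  have := weight_eq_zero_of_subsingleton (G := Abelianization G)
  omega
end

section
/- Let G be a finitely generated group and n ≥ 1 an integer. Then G has a finite proper n-covering by normal finite-index subgroups (i.e., there exist finitely many proper normal finite-index subgroups N_1, ..., N_k of G such that every set of n elements of G is contained in some N_i) if and only if the weight of the abelianisation G^ab is at least n+1, equivalently, if and only if there exist a prime p and a surjective group homomorphism from G onto the elementary abelian p-group (C_p)^{n+1} of rank n+1. -/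
/-- A group `G` has a *finite proper `n`-covering by normal finite-index subgroups* if
there are finitely many proper normal finite-index subgroups of `G` such that every
collection of `n` elements of `G` lies in one of them. -/
def HasFiniteProperNCovering (G : Type*) [Group G] (n : ℕ) : Prop :=
  ∃ (k : ℕ) (N : Fin k → Subgroup G),
    (∀ i, (N i).Normal ∧ N i ≠ ⊤ ∧ (N i).FiniteIndex) ∧
    ∀ f : Fin n → G, ∃ i, ∀ j, f j ∈ N i

/-!
A surjection `G → (C_p)^{n+1}` gives an `n`-covering: coverings pull back along surjections, and
`n` vectors of an `(n+1)`-dimensional space over a finite field span a proper subspace, hence lie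
in the kernel of some nonzero functional.

Conversely, let the images of `g₁, …, gₙ` generate `G^ab` and enlarge the members of a covering to
maximal normal subgroups `M`. Those containing `G'` miss some `gᵢ`. The others have nonabelian
simple quotients, and such an `M` is prime among normal subgroups: if `A, B ⊄ M` then `A` and `B`
map onto `G/M`, so `⁅A, B⁆ ≤ A ⊓ B` maps onto `(G/M)' = G/M`. Hence `G' ⊓ ⋂ (the other M)` is
not contained in any one of them, and multiplying `g₁` by a suitable element of `G'` makes the
tuple escape every member of the covering.

Finally, write the finitely generated abelian group `G^ab` as `ℤ^r ⊕ ⨁ ℤ/pᵢ^eᵢ`. If it has no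
quotient `(C_p)^{n+1}`, then for every `p`, `r` plus the number of nontrivial `p`-power summands is
at most `n`; so the torsion summands can be coloured with `n - r` colours, distinct primes within
each colour, and by the Chinese remainder theorem each colour class is cyclic. Thus `G^ab` is
generated by `n` elements.
-/

open DirectSum Function

section Covering

variable {G : Type*} [Group G] {n : ℕ}

theorem HasFiniteProperNCovering.of_finite {ι : Type*} [Finite ι] (N : ι → Subgroup G)
    (hN : ∀ i, (N i).Normal ∧ N i ≠ ⊤ ∧ (N i).FiniteIndex)
    (hcov : ∀ f : Fin n → G, ∃ i, ∀ j, f j ∈ N i) : HasFiniteProperNCovering G n := by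
  obtain ⟨k, ⟨e⟩⟩ := Finite.exists_equiv_fin ι
  exact ⟨k, N ∘ e.symm, fun i => hN _, fun f => (hcov f).imp' e fun i => by simp⟩

theorem HasFiniteProperNCovering.of_surjective {Q : Type*} [Group Q] (φ : G →* Q)
    (hφ : Surjective φ) (hQ : HasFiniteProperNCovering Q n) : HasFiniteProperNCovering G n := by
  obtain ⟨k, N, hN, hcov⟩ := hQ
  refine ⟨k, fun i => (N i).comap φ, fun i => ⟨(hN i).1.comap φ, ?_, ?_⟩, fun f => hcov (φ ∘ f)⟩
  · rw [Ne, ← Subgroup.comap_top φ]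
    exact (Subgroup.comap_injective hφ).ne (hN i).2.1
  · rw [Subgroup.finiteIndex_iff, Subgroup.index_comap_of_surjective _ hφ]
    exact (hN i).2.2.index_ne_zero

theorem hasFiniteProperNCovering_multiplicative_of_lt_finrank {K V : Type*} [Field K] [Finite K]
    [AddCommGroup V] [Module K V] [FiniteDimensional K V] (hn : n < Module.finrank K V) :
    HasFiniteProperNCovering (Multiplicative V) n := by
  have : Finite (Module.Dual K V) := Module.finite_of_finite K
  refine .of_finite (fun l : {l : Module.Dual K V // l ≠ 0} =>
      (AddMonoidHom.toMultiplicative l.1.toAddMonoidHom).ker)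
    (fun l => ⟨inferInstance, ?_, inferInstance⟩) fun f => ?_
  · obtain ⟨v, hv⟩ : ∃ v, l.1 v ≠ 0 := not_forall.1 fun h => l.2 (LinearMap.ext h)
    exact fun htop => hv (by simpa using htop.ge (Subgroup.mem_top (Multiplicative.ofAdd v)))
  · have hspan : Submodule.span K (Set.range (Multiplicative.toAdd ∘ f)) < ⊤ := by
      refine lt_top_iff_ne_top.2 fun htop => ?_
      have := finrank_range_le_card (R := K) (Multiplicative.toAdd ∘ f)
      rw [Set.finrank, htop, finrank_top, Fintype.card_fin] at this
      omega
    obtain ⟨l, hl, hle⟩ := Submodule.exists_le_ker_of_lt_top _ hspan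
    exact ⟨⟨l, hl⟩, fun j => hle (Submodule.subset_span ⟨j, rfl⟩)⟩

theorem hasFiniteProperNCovering_of_surjective {p : ℕ} (hp : p.Prime)
    (φ : G →* Multiplicative (Fin (n + 1) → ZMod p)) (hφ : Surjective φ) :
    HasFiniteProperNCovering G n :=
  have := Fact.mk hp
  .of_surjective φ hφ (hasFiniteProperNCovering_multiplicative_of_lt_finrank (K := ZMod p) (by simp))

end Covering

section Weight

theorem weight_le_card_of_closure_eq_top {A : Type*} [Group A] (S : Finset A)
    (hS : Subgroup.closure (S : Set A) = ⊤) : weight A ≤ S.card :=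
  Nat.sInf_le ⟨S, rfl, top_le_iff.1 (hS ▸ Subgroup.closure_le_normalClosure)⟩

variable {A : Type*} [CommGroup A] {n : ℕ}

theorem exists_closure_range_eq_top_of_weight_le [hA : Group.FG A] (h : weight A ≤ n) :
    ∃ u : Fin n → A, Subgroup.closure (Set.range u) = ⊤ := by
  obtain ⟨S₀, hS₀⟩ := Group.fg_def.1 hA
  obtain ⟨S, hcard, hS⟩ : weight A ∈ {n | ∃ S : Finset A, S.card = n ∧ _} :=
    Nat.sInf_mem ⟨S₀.card, S₀, rfl, top_le_iff.1 (hS₀ ▸ Subgroup.closure_le_normalClosure)⟩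
  have hS' : Subgroup.closure (S : Set A) = ⊤ := top_le_iff.1 <|
    hS ▸ Subgroup.normalClosure_le_normal (N := Subgroup.closure _) Subgroup.subset_closure
  obtain ⟨e⟩ : Nonempty (S ↪ Fin n) := Embedding.nonempty_of_card_le (by simpa [hcard] using h)
  refine ⟨extend e Subtype.val 1, top_le_iff.1 (hS' ▸ Subgroup.closure_mono ?_)⟩
  exact fun s hs => ⟨e ⟨s, hs⟩, e.injective.extend_apply _ _ _⟩

theorem weight_le_of_surjective_pi_int (f : (Fin n → ℤ) →+ Additive A) (hf : Surjective f) :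
    weight A ≤ n := by
  classical
  let S := Finset.univ.image fun j => (f (Pi.single j 1)).toMul
  refine (weight_le_card_of_closure_eq_top S (eq_top_iff.2 fun a _ => ?_)).trans
    (Finset.card_image_le.trans (by simp))
  obtain ⟨v, hv⟩ := hf (Additive.ofMul a)
  rw [← toMul_ofMul a, ← hv, ← Finset.univ_sum_single v, map_sum, toMul_sum]
  refine Subgroup.prod_mem _ fun j _ => ?_
  have hj : Pi.single j (v j) = v j • (Pi.single j 1 : Fin n → ℤ) := by
    rw [← Pi.single_smul', smul_eq_mul, mul_one]
  rw [hj, map_zsmul, toMul_zsmul]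
  exact Subgroup.zpow_mem _ (Subgroup.subset_closure (by simp [S])) _

end Weight

section MaximalNormal

variable {G : Type*} [Group G]

def Subgroup.IsMaximalNormal (H : Subgroup G) : Prop :=
  Maximal (fun K : Subgroup G => K.Normal ∧ K ≠ ⊤) H

namespace Subgroup.IsMaximalNormal

variable {H : Subgroup G} (hH : H.IsMaximalNormal)
include hH

theorem normal : H.Normal := hH.prop.1

theorem ne_top : H ≠ ⊤ := hH.prop.2

theorem sup_eq_top {A : Subgroup G} (hA : A.Normal) (hAH : ¬ A ≤ H) : A ⊔ H = ⊤ := by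
  have := hH.normal
  by_contra hne
  exact hAH (le_sup_left.trans (hH.2 ⟨Subgroup.sup_normal A H, hne⟩ le_sup_right))

theorem eq_of_le {K : Subgroup G} (hK : K.IsMaximalNormal) (hKH : K ≤ H) : K = H :=
  le_antisymm hKH (hK.2 hH.prop hKH)

end Subgroup.IsMaximalNormal

theorem Subgroup.exists_le_isMaximalNormal {N : Subgroup G} [N.Normal] [N.FiniteIndex]
    (hN : N ≠ ⊤) : ∃ M, N ≤ M ∧ M.IsMaximalNormal := by
  let S : Set (Subgroup G) := {K | N ≤ K ∧ K.Normal ∧ K ≠ ⊤}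
  have hS : S.Finite := by
    refine (Set.finite_range (Subgroup.comap (QuotientGroup.mk' N))).subset fun K hK => ?_
    refine ⟨K.map (QuotientGroup.mk' N), ?_⟩
    rw [Subgroup.comap_map_eq, QuotientGroup.ker_mk', sup_eq_left.2 hK.1]
  obtain ⟨M, hNM, hM⟩ := hS.exists_le_maximal ⟨le_rfl, inferInstance, hN⟩
  exact ⟨M, hNM, hM.prop.2, fun K hK hMK => hM.2 ⟨hNM.trans hMK, hK⟩ hMK⟩

theorem Subgroup.commutator_sup_eq_of_sup_eq_top {A B H : Subgroup G} [H.Normal]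
    (hA : A ⊔ H = ⊤) (hB : B ⊔ H = ⊤) : ⁅A, B⁆ ⊔ H = _root_.commutator G ⊔ H := by
  set f := QuotientGroup.mk' H
  have hmap (K : Subgroup G) : (K ⊔ H).map f = K.map f := by
    rw [Subgroup.map_sup, QuotientGroup.map_mk'_self, sup_bot_eq]
  calc ⁅A, B⁆ ⊔ H = (⁅A, B⁆.map f).comap f := by rw [Subgroup.comap_map_eq, QuotientGroup.ker_mk']
    _ = ((⁅⊤, ⊤⁆ : Subgroup G).map f).comap f := by
      rw [Subgroup.map_commutator, Subgroup.map_commutator, ← hmap A, ← hmap B, hA, hB]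
    _ = _root_.commutator G ⊔ H := by
      rw [Subgroup.comap_map_eq, QuotientGroup.ker_mk', _root_.commutator_def]

namespace Subgroup.IsMaximalNormal

variable {H : Subgroup G} (hH : H.IsMaximalNormal) (hG' : ¬ _root_.commutator G ≤ H)
include hH hG'

theorem le_or_le_of_inf_le {A B : Subgroup G} (hA : A.Normal) (hB : B.Normal)
    (hAB : A ⊓ B ≤ H) : A ≤ H ∨ B ≤ H := by
  have := hH.normal
  by_contra! h
  refine hG' (le_sup_left.trans (b := _root_.commutator G ⊔ H) ?_)
  rw [← Subgroup.commutator_sup_eq_of_sup_eq_top (hH.sup_eq_top hA h.1) (hH.sup_eq_top hB h.2)]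
  exact sup_le ((Subgroup.commutator_le_inf A B).trans hAB) le_rfl

theorem not_commutator_inf_le (𝒮 : Finset (Subgroup G))
    (h𝒮 : ∀ K ∈ 𝒮, K.IsMaximalNormal ∧ K ≠ H) : ¬ _root_.commutator G ⊓ 𝒮.inf id ≤ H := by
  classical
  induction 𝒮 using Finset.induction_on with
  | empty => simpa using hG'
  | insert K s _ ih =>
    have hK := h𝒮 K (Finset.mem_insert_self K s)
    have hs : (s.inf id).Normal := Finset.inf_induction Subgroup.normal_top
      (fun _ h₁ _ h₂ => @Subgroup.normal_inf_normal _ _ _ _ h₁ h₂)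
      fun K' hK' => (h𝒮 K' (Finset.mem_insert_of_mem hK')).1.normal
    intro hle
    rw [Finset.inf_insert, id, inf_left_comm] at hle
    rcases hH.le_or_le_of_inf_le hG' hK.1.normal (Subgroup.normal_inf_normal _ _) hle with
      hKH | hsH
    · exact hK.2 (hH.eq_of_le hK.1 hKH)
    · exact ih (fun K' hK' => h𝒮 K' (Finset.mem_insert_of_mem hK')) hsH

end Subgroup.IsMaximalNormal

theorem exists_mem_commutator_forall_mul_notMem (𝒮 : Finset (Subgroup G))
    (h𝒮 : ∀ H ∈ 𝒮, H.IsMaximalNormal ∧ ¬ commutator G ≤ H) (a : G) :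
    ∃ c ∈ commutator G, ∀ H ∈ 𝒮, a * c ∉ H := by
  classical
  induction 𝒮 using Finset.induction_on with
  | empty => exact ⟨1, one_mem _, by simp⟩
  | insert H₀ s hH₀s ih =>
    obtain ⟨c, hc, hcs⟩ := ih fun K hK => h𝒮 K (Finset.mem_insert_of_mem hK)
    obtain ⟨hH₀, hG'⟩ := h𝒮 H₀ (Finset.mem_insert_self H₀ s)
    by_cases hac : a * c ∈ H₀
    · obtain ⟨d, ⟨hdG', hds⟩, hdH₀⟩ := SetLike.not_le_iff_exists.1 <|
        hH₀.not_commutator_inf_le hG' s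
          fun K hK => ⟨(h𝒮 K (Finset.mem_insert_of_mem hK)).1, fun h => hH₀s (h ▸ hK)⟩
      refine ⟨c * d, mul_mem hc hdG', Finset.forall_mem_insert _ _ _ |>.2 ⟨?_, fun K hK => ?_⟩⟩
      · rw [← mul_assoc, mul_mem_cancel_left hac]
        exact hdH₀
      · have hdK : d ∈ K := Finset.inf_le (f := id) hK hds
        rw [← mul_assoc, mul_mem_cancel_right hdK]
        exact hcs K hK
    · exact ⟨c, hc, Finset.forall_mem_insert _ _ _ |>.2 ⟨hac, hcs⟩⟩

theorem not_hasFiniteProperNCovering_of_closure_sup_commutator_eq_top {n : ℕ} [NeZero n]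
    (g : Fin n → G) (hg : Subgroup.closure (Set.range g) ⊔ commutator G = ⊤) :
    ¬ HasFiniteProperNCovering G n := by
  classical
  rintro ⟨k, N, hN, hcov⟩
  choose M hNM hM using fun i =>
    have := (hN i).1; have := (hN i).2.2; Subgroup.exists_le_isMaximalNormal (hN i).2.1
  obtain ⟨c, hc, hcM⟩ := exists_mem_commutator_forall_mul_notMem
    ((Finset.univ.image M).filter (¬ commutator G ≤ ·)) (by simpa using fun i hi => ⟨hM i, hi⟩)
    (g 0)
  obtain ⟨i, hi⟩ := hcov (update g 0 (g 0 * c))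
  have hiM (j : Fin n) : update g 0 (g 0 * c) j ∈ M i := hNM i (hi j)
  by_cases hG' : commutator G ≤ M i
  · refine (hM i).ne_top (eq_top_iff.2 (hg ▸ sup_le ((Subgroup.closure_le _).2 ?_) hG'))
    rintro _ ⟨j, rfl⟩
    rcases eq_or_ne j 0 with rfl | hj
    · exact (mul_mem_cancel_right (hG' hc)).1 (by simpa using hiM 0)
    · simpa [hj] using hiM j
  · exact hcM (M i) (by simp [hG']) (by simpa using hiM 0)

theorem HasFiniteProperNCovering.le_weight_abelianization [Group.FG (Abelianization G)]
    {n : ℕ} [NeZero n] (hcov : HasFiniteProperNCovering G n) :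
    n + 1 ≤ weight (Abelianization G) := by
  by_contra! hw
  obtain ⟨u, hu⟩ := exists_closure_range_eq_top_of_weight_le (Nat.le_of_lt_succ hw)
  choose g hg using fun j => QuotientGroup.mk'_surjective _ (u j)
  refine not_hasFiniteProperNCovering_of_closure_sup_commutator_eq_top g ?_ hcov
  have : Abelianization.of ∘ g = u := funext hg
  rw [← Abelianization.ker_of, ← Subgroup.comap_map_eq, MonoidHom.map_closure, ← Set.range_comp,
    this, hu, Subgroup.comap_top]

end MaximalNormal

section FGAbelian

theorem exists_surjective_free_prod_directSum_zmod_to_pi {ι : Type*} [Fintype ι] (p e : ι → ℕ)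
    (r P : ℕ) [NeZero P] :
    ∃ f : (Fin r →₀ ℤ) × (⨁ i, ZMod (p i ^ e i)) →+ (Fin r ⊕ {i // e i ≠ 0 ∧ p i = P} → ZMod P),
      Surjective f := by
  classical
  have hdvd (i : {i // e i ≠ 0 ∧ p i = P}) : P ∣ p i ^ e i := by
    obtain ⟨i, hi, rfl⟩ := i
    exact dvd_pow_self _ hi
  refine ⟨AddMonoidHom.pi (Sum.elim
    (fun j => (Int.castAddHom (ZMod P)).comp ((Finsupp.applyAddHom j).comp (AddMonoidHom.fst _ _)))
    (fun i => (ZMod.castHom (hdvd i) (ZMod P)).toAddMonoidHom.comp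
      ((Pi.evalAddMonoidHom (fun i => ZMod (p i ^ e i)) i.1).comp
        ((DirectSum.addEquivProd _).toAddMonoidHom.comp (AddMonoidHom.snd _ _))))), fun w => ?_⟩
  refine ⟨(Finsupp.equivFunOnFinite.symm fun j => ((w (.inl j)).val : ℤ),
    (DirectSum.addEquivProd _).symm fun i =>
      if h : e i ≠ 0 ∧ p i = P then ((w (.inr ⟨i, h⟩)).val : ZMod (p i ^ e i)) else 0), ?_⟩
  funext k
  rcases k with j | ⟨i, h⟩
  · simp
  · simp [h]

theorem exists_surjective_fin_of_card_le {A M κ : Type*} [AddCommMonoid A] [AddCommMonoid M]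
    [Fintype κ] (f : A →+ (κ → M)) (hf : Surjective f) {n : ℕ} (h : n ≤ Fintype.card κ) :
    ∃ g : A →+ (Fin n → M), Surjective g := by
  obtain ⟨ρ⟩ := Embedding.nonempty_of_card_le (α := Fin n) (β := κ) (by simpa using h)
  exact ⟨(AddMonoidHom.pi fun j => Pi.evalAddMonoidHom _ (ρ j)).comp f,
    (ρ.injective.surjective_comp_right' fun _ => 0).comp hf⟩

theorem exists_surjective_pi_fin_add_prod {M X Y : Type*} [AddCommMonoid M] [AddCommMonoid X]
    [AddCommMonoid Y] {r m : ℕ} (f : (Fin r → M) →+ X) (hf : Surjective f)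
    (g : (Fin m → M) →+ Y) (hg : Surjective g) :
    ∃ h : (Fin (r + m) → M) →+ X × Y, Surjective h := by
  refine ⟨(f.comp (AddMonoidHom.pi fun j => Pi.evalAddMonoidHom _ (Fin.castAdd m j))).prod
    (g.comp (AddMonoidHom.pi fun j => Pi.evalAddMonoidHom _ (Fin.natAdd r j))), ?_⟩
  rintro ⟨x, y⟩
  obtain ⟨a, rfl⟩ := hf x
  obtain ⟨b, rfl⟩ := hg y
  exact ⟨Fin.append a b, Prod.ext (congrArg f (funext (Fin.append_left a b)))
    (congrArg g (funext (Fin.append_right a b)))⟩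

theorem exists_natCast_eq_of_pairwise_coprime {ι : Type*} (t : Finset ι) (q : ι → ℕ)
    [∀ i, NeZero (q i)] (hq : (t : Set ι).Pairwise (Nat.Coprime on q)) (y : ∀ i, ZMod (q i)) :
    ∃ k : ℕ, ∀ i ∈ t, (k : ZMod (q i)) = y i := by
  obtain ⟨k, hk⟩ := Nat.chineseRemainderOfFinset (fun i => (y i).val) q t
    (fun i _ => NeZero.ne _) hq
  refine ⟨k, fun i hi => ?_⟩
  rw [← ZMod.natCast_zmod_val (y i)]
  exact (ZMod.natCast_eq_natCast_iff _ _ _).2 (hk i hi)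

theorem exists_injective_prodMk_fin {ι κ : Type*} [Finite ι] (c : ι → κ) {m : ℕ}
    (h : ∀ k, Nat.card {i // c i = k} ≤ m) : ∃ σ : ι → Fin m, Injective fun i => (c i, σ i) := by
  classical
  have := Fintype.ofFinite ι
  have he (k : κ) : Nonempty ({i // c i = k} ↪ Fin m) :=
    Embedding.nonempty_of_card_le (by simpa [Nat.card_eq_fintype_card] using h k)
  let e k := (he k).some
  have he' (i : ι) (k : κ) (hi : c i = k) : e k ⟨i, hi⟩ = e (c i) ⟨i, rfl⟩ := by subst hi; rfl
  refine ⟨fun i => e (c i) ⟨i, rfl⟩, fun i j hij => ?_⟩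
  obtain ⟨hc, hσ⟩ := Prod.mk.inj hij
  exact congrArg Subtype.val ((e (c j)).injective ((he' i _ hc).trans hσ))

theorem exists_surjective_pi_int_directSum_zmod {ι : Type*} [Fintype ι] (p e : ι → ℕ)
    (hp : ∀ i, (p i).Prime) {m : ℕ} (hm : ∀ P, Nat.card {i // e i ≠ 0 ∧ p i = P} ≤ m) :
    ∃ f : (Fin m → ℤ) →+ ⨁ i, ZMod (p i ^ e i), Surjective f := by
  classical
  obtain ⟨σ, hσ⟩ := exists_injective_prodMk_fin (fun i : {i // e i ≠ 0} => p i) fun P =>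
    (Nat.card_congr (Equiv.subtypeSubtypeEquivSubtypeInter _ _)).trans_le (hm P)
  have (i : ι) : NeZero (p i ^ e i) := ⟨pow_ne_zero _ (hp i).ne_zero⟩
  refine ⟨∑ i : {i // e i ≠ 0}, (DirectSum.of (fun i => ZMod (p i ^ e i)) i).comp
    ((Int.castAddHom _).comp (Pi.evalAddMonoidHom (fun _ => ℤ) (σ i))), fun y => ?_⟩
  have hcop (j : Fin m) : ((Finset.univ.filter (σ · = j) : Finset {i // e i ≠ 0}) : Set _).Pairwise
      (Nat.Coprime on fun i : {i // e i ≠ 0} => p i ^ e i) := by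
    intro i hi i' hi' hne
    have hpp : p i ≠ p i' := fun h => hne (hσ (Prod.ext h (by simp_all)))
    exact Nat.Coprime.pow _ _ ((Nat.coprime_primes (hp _) (hp _)).2 hpp)
  choose k hk using fun j => exists_natCast_eq_of_pairwise_coprime _ _ (hcop j) fun i => y i
  refine ⟨fun j => k j, ?_⟩
  have htriv (i : {i // ¬ e i ≠ 0}) : DirectSum.of (fun i => ZMod (p i ^ e i)) i.1 (y i.1) = 0 := by
    have : Subsingleton (ZMod (p i ^ e i)) := ZMod.subsingleton_iff.2 (by simp [not_not.1 i.2])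
    rw [Subsingleton.elim (y i.1) 0, map_zero]
  rw [← DirectSum.sum_univ_of y, ← Fintype.sum_subtype_add_sum_subtype (fun i => e i ≠ 0)]
  simp [htriv, hk]

theorem AddCommGroup.exists_surjective_pi_int_of_forall_not_surjective_pi_zmod {A : Type*}
    [AddCommGroup A] [AddGroup.FG A] {n : ℕ}
    (h : ∀ p, p.Prime → ∀ f : A →+ (Fin (n + 1) → ZMod p), ¬ Surjective f) :
    ∃ f : (Fin n → ℤ) →+ A, Surjective f := by
  obtain ⟨r, ι, _, p, hp, e, ⟨ee⟩⟩ := AddCommGroup.equiv_free_prod_directSum_zmod A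
  have hcount (P : ℕ) (hP : P.Prime) : r + Nat.card {i // e i ≠ 0 ∧ p i = P} ≤ n := by
    have := Fact.mk hP
    by_contra! hlt
    obtain ⟨f, hf⟩ := exists_surjective_free_prod_directSum_zmod_to_pi p e r P
    obtain ⟨g, hg⟩ := exists_surjective_fin_of_card_le f hf (n := n + 1)
      (by simpa [Nat.card_eq_fintype_card] using hlt)
    exact h P hP (g.comp ee.toAddMonoidHom) (hg.comp ee.surjective)
  obtain ⟨m, rfl⟩ :=
    Nat.exists_eq_add_of_le ((Nat.le_add_right _ _).trans (hcount 2 Nat.prime_two))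
  have hm (P : ℕ) : Nat.card {i // e i ≠ 0 ∧ p i = P} ≤ m := by
    by_cases hP : P.Prime
    · have := hcount P hP
      omega
    · have : IsEmpty {i // e i ≠ 0 ∧ p i = P} := ⟨fun i => hP (i.2.2 ▸ hp i)⟩
      simp
  obtain ⟨g, hg⟩ := exists_surjective_pi_int_directSum_zmod p e hp hm
  obtain ⟨f, hf⟩ := exists_surjective_pi_fin_add_prod
    Finsupp.addEquivFunOnFinite.symm.toAddMonoidHom (AddEquiv.surjective _) g hg
  exact ⟨ee.symm.toAddMonoidHom.comp f, ee.symm.surjective.comp hf⟩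

end FGAbelian

theorem exists_surjective_of_le_weight_abelianization {G : Type*} [Group G]
    [Group.FG (Abelianization G)] {n : ℕ} (h : n + 1 ≤ weight (Abelianization G)) :
    ∃ p : ℕ, p.Prime ∧ ∃ φ : G →* Multiplicative (Fin (n + 1) → ZMod p), Surjective φ := by
  by_contra! hno
  obtain ⟨f, hf⟩ := AddCommGroup.exists_surjective_pi_int_of_forall_not_surjective_pi_zmod
    (A := Additive (Abelianization G)) fun p hp ψ hψ =>
      hno p hp ((AddMonoidHom.toMultiplicativeRight ψ).comp Abelianization.of)
        (hψ.comp (QuotientGroup.mk'_surjective _))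
  have := weight_le_of_surjective_pi_int f hf
  omega

/-- A finitely generated group `G` has a finite proper `n`-covering by normal
finite-index subgroups iff `w(G^ab) ≥ n + 1`, equivalently iff `G` surjects onto the
elementary abelian `p`-group `(C_p)^{n+1}` of rank `n + 1` for some prime `p`. -/
theorem hasFiniteProperNCovering_iff
    (G : Type*) [Group G] (hfg : Group.FG G) (n : ℕ) (hn : 1 ≤ n) :
    (HasFiniteProperNCovering G n ↔ n + 1 ≤ weight (Abelianization G)) ∧
    (HasFiniteProperNCovering G n ↔
      ∃ p : ℕ, p.Prime ∧
        ∃ φ : G →* Multiplicative (Fin (n + 1) → ZMod p), Function.Surjective φ) := by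
  have : Group.FG (Abelianization G) := Group.fg_of_surjective (QuotientGroup.mk'_surjective _)
  have : NeZero n := ⟨by omega⟩
  have hsurj : (∃ p : ℕ, p.Prime ∧ ∃ φ : G →* Multiplicative (Fin (n + 1) → ZMod p),
      Function.Surjective φ) → HasFiniteProperNCovering G n :=
    fun ⟨_, hp, φ, hφ⟩ => hasFiniteProperNCovering_of_surjective hp φ hφ
  exact ⟨⟨(·.le_weight_abelianization), hsurj ∘ exists_surjective_of_le_weight_abelianization⟩,
    ⟨fun h => exists_surjective_of_le_weight_abelianization h.le_weight_abelianization, hsurj⟩⟩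
end
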